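/- arXiv:2111.11960 — 4 statements merged into one kernel-verified Lean document; each statement's English description precedes it below -/
import Mathlib

section
/- (Dempster's theorem, matrix form.) Let Σ be a symmetric positive definite real matrix of size (2 + q) × (2 + q), written in block form with blocks Σ₁₁ (2 × 2), Σ₁₂ (2 × q), Σ₂₁ (q × 2), Σ₂₂ (q × q), and let K = Σ⁻¹. Then the (1,2) entry of the conditional covariance matrix Σ₁₁ − Σ₁₂ Σ₂₂⁻¹ Σ₂₁ is zero if and only if the (1,2) entry of K is zero. (In the Gaussian model with covariance Σ, the first two coordinates are conditionally independent given the remaining q coordinates if and only if the corresponding entry of the precision matrix K vanishes.) -/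
open Matrix

lemma toBlocks₂₂_posDef (q : ℕ) (S : Matrix (Fin 2 ⊕ Fin q) (Fin 2 ⊕ Fin q) ℝ)
    (hpd : S.PosDef) : S.toBlocks₂₂.PosDef := by
  refine Matrix.PosDef.of_dotProduct_mulVec_pos ?_ fun x hx => ?_
  · ext i j
    simpa [Matrix.toBlocks₂₂, Matrix.IsHermitian] using congrFun (congrFun hpd.1 (Sum.inr i)) (Sum.inr j)
  · have hy : (Sum.elim (0 : Fin 2 → ℝ) x) ≠ 0 := by
      intro h
      exact hx (funext fun i => congrFun h (Sum.inr i))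
    have := hpd.dotProduct_mulVec_pos hy
    simpa [Matrix.toBlocks₂₂, Matrix.mulVec, dotProduct, Fintype.sum_sum_type] using this

/-- (Dempster's theorem, matrix form.) Let `Σ` be a symmetric positive definite matrix of
size `(2 + q) × (2 + q)` in block form with blocks `Σ₁₁ (2×2), Σ₁₂, Σ₂₁, Σ₂₂`, and let
`K = Σ⁻¹` be the precision matrix.  Then the `(1,2)` entry of the conditional covariance
matrix `Σ₁₁ - Σ₁₂ Σ₂₂⁻¹ Σ₂₁` vanishes if and only if the `(1,2)` entry of `K` vanishes. -/
theorem conditional_independence_iff_precision_entry_zero (q : ℕ)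
    (S : Matrix (Fin 2 ⊕ Fin q) (Fin 2 ⊕ Fin q) ℝ)
    (hsym : S.IsSymm) (hpd : S.PosDef) :
    (S.toBlocks₁₁ - S.toBlocks₁₂ * (S.toBlocks₂₂)⁻¹ * S.toBlocks₂₁) 0 1 = 0 ↔
      S⁻¹ (Sum.inl 0) (Sum.inl 1) = 0 := by
  set A := S.toBlocks₁₁
  set B := S.toBlocks₁₂
  set C := S.toBlocks₂₁
  set D := S.toBlocks₂₂
  have hD : D.PosDef := toBlocks₂₂_posDef q S hpd
  letI : Invertible D := hD.isUnit.invertible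
  letI : Invertible S := hpd.isUnit.invertible
  have hSb : S = fromBlocks A B C D := (fromBlocks_toBlocks S).symm
  letI : Invertible (fromBlocks A B C D) := by rw [← hSb]; infer_instance
  letI iM : Invertible (A - B * ⅟D * C) := invertibleOfFromBlocks₂₂Invertible A B C D
  set M := A - B * ⅟D * C with hM
  have hMD : M = A - B * D⁻¹ * C := by rw [hM, invOf_eq_nonsing_inv]
  -- S⁻¹ top-left block is M⁻¹
  have hinv : S⁻¹ = fromBlocks (⅟M) (-(⅟M * B * ⅟D))
      (-(⅟D * C * ⅟M)) (⅟D + ⅟D * C * ⅟M * B * ⅟D) := by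
    rw [hSb, ← invOf_eq_nonsing_inv, invOf_fromBlocks₂₂_eq]
  have hentry : S⁻¹ (Sum.inl 0) (Sum.inl 1) = M⁻¹ 0 1 := by
    rw [hinv, ← invOf_eq_nonsing_inv]
    rfl
  have hdet : M.det ≠ 0 := (isUnit_iff_isUnit_det M).1 (isUnit_of_invertible M) |>.ne_zero
  have h01 : M⁻¹ 0 1 = (M.det)⁻¹ * (-(M 0 1)) := by
    rw [Matrix.inv_def, Matrix.adjugate_fin_two]
    simp [Matrix.smul_apply]
  rw [← hMD, hentry, h01]
  constructor
  · intro h; simp [h]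
  · intro h
    rcases mul_eq_zero.1 h with h' | h'
    · exact absurd (inv_eq_zero.1 h') hdet
    · linarith [neg_eq_zero.1 h']
end

section
/- Let d ≥ 1 and α > 0, and define the Bessel-potential kernel G_α : ℝ^d → ℝ by G_α(x) := (4π)^{−α/2} Γ(α/2)^{−1} ∫₀^∞ e^{−π|x|²/u} e^{−u/(4π)} u^{(α−d)/2 − 1} du. Then G_α is integrable on ℝ^d and its Fourier transform satisfies 𝓕G_α(ξ) = (1 + 4π²|ξ|²)^{−α/2} for all ξ ∈ ℝ^d. -/
open MeasureTheory Real Set Complex FourierTransform RealInnerProductSpace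

lemma besselAux_gammaIntegrable {a r : ℝ} (ha : 0 < a) (hr : 0 < r) :
    IntegrableOn (fun u : ℝ => u ^ (a - 1) * Real.exp (-(r * u))) (Set.Ioi 0) := by
  have h0 : IntegrableOn (fun x : ℝ => Real.exp (-x) * x ^ (a - 1)) (Set.Ioi 0) :=
    Real.GammaIntegral_convergent ha
  have h1 : IntegrableOn (fun u : ℝ =>
      Real.exp (-(r * u)) * (r * u) ^ (a - 1)) (Set.Ioi 0) := by
    have := (integrableOn_Ioi_comp_mul_left_iff
      (fun x : ℝ => Real.exp (-x) * x ^ (a - 1)) 0 hr).mpr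
    simpa [mul_zero] using this (by simpa using h0)
  have h2 := h1.const_mul (r ^ (1 - a))
  refine IntegrableOn.congr_fun h2 (fun u hu => ?_) measurableSet_Ioi
  have hu0 : (0:ℝ) < u := hu
  rw [Real.mul_rpow hr.le hu0.le]
  rw [show r ^ (1 - a) * (Real.exp (-(r * u)) * (r ^ (a - 1) * u ^ (a - 1)))
      = (r ^ (1 - a) * r ^ (a - 1)) * (u ^ (a - 1) * Real.exp (-(r * u))) by ring]
  rw [← Real.rpow_add hr]
  norm_num

lemma besselAux_ofReal_integral {X : Type*} [MeasurableSpace X] (μ : MeasureTheory.Measure X)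
    (f : X → ℝ) : ∫ x, ((f x : ℝ) : ℂ) ∂μ = ((∫ x, f x ∂μ : ℝ) : ℂ) :=
  integral_ofReal

lemma besselAux_gaussIntegrable {E : Type*} [NormedAddCommGroup E] [InnerProductSpace ℝ E]
    [FiniteDimensional ℝ E] [MeasurableSpace E] [BorelSpace E] {b : ℝ} (hb : 0 < b) :
    Integrable (fun x : E => Real.exp (-b * ‖x‖ ^ 2)) := by
  have h := (GaussianFourier.integrable_cexp_neg_mul_sq_norm_add (V := E) (b := (b : ℂ))
    (by simpa using hb) 0 0).norm
  refine h.congr (Filter.Eventually.of_forall fun v => ?_)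
  norm_cast
  simp [Complex.norm_exp]

/-- The Bessel-potential kernel `G_α` is integrable on `ℝ^d` and its Fourier transform is
`ξ ↦ (1 + 4π²|ξ|²)^{-α/2}`. -/
theorem besselKernel_integrable_and_fourier (d : ℕ) (hd : 1 ≤ d) (α : ℝ) (hα : 0 < α)
    (G : EuclideanSpace ℝ (Fin d) → ℝ)
    (hG : ∀ x, G x = (4 * π) ^ (-α / 2) * (Real.Gamma (α / 2))⁻¹ *
      ∫ u in Set.Ioi (0 : ℝ),
        Real.exp (-π * ‖x‖ ^ 2 / u) * Real.exp (-u / (4 * π)) * u ^ ((α - d) / 2 - 1)) :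
    Integrable G ∧
      ∀ ξ : EuclideanSpace ℝ (Fin d),
        FourierTransform.fourier (fun x => (G x : ℂ)) ξ
          = ((1 + 4 * π ^ 2 * ‖ξ‖ ^ 2) ^ (-α / 2) : ℝ) := by
  have hα2 : 0 < α / 2 := by positivity
  set c : ℝ := (4 * π) ^ (-α / 2) * (Real.Gamma (α / 2))⁻¹ with hc
  set F : EuclideanSpace ℝ (Fin d) → ℝ → ℝ := fun x u =>
      Real.exp (-π * ‖x‖ ^ 2 / u) * Real.exp (-u / (4 * π)) * u ^ ((α - d) / 2 - 1) with hF
  set ν : Measure ℝ := volume.restrict (Set.Ioi 0) with hν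
  set K : ℝ → ℝ := fun u => Real.exp (-u / (4 * π)) * u ^ ((α - d) / 2 - 1) with hK
  -- measurability
  have hmeas : Measurable fun p : EuclideanSpace ℝ (Fin d) × ℝ => F p.1 p.2 := by
    simp only [hF]
    fun_prop
  -- integrability in x for fixed u > 0
  have hFint : ∀ u : ℝ, u ∈ Set.Ioi (0:ℝ) → Integrable (fun x : EuclideanSpace ℝ (Fin d) => F x u) := by
    intro u hu
    have hu0 : (0:ℝ) < u := hu
    have h := (besselAux_gaussIntegrable (E := EuclideanSpace ℝ (Fin d)) (div_pos pi_pos hu0)).mul_const (K u)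
    refine h.congr (Filter.Eventually.of_forall fun x => ?_)
    simp only [hF, hK]
    rw [show -(π / u) * ‖x‖ ^ 2 = -π * ‖x‖ ^ 2 / u by ring]
    ring
  -- value of the x-integral of the norm
  have hFnorm : ∀ u ∈ Set.Ioi (0:ℝ),
      (∫ x : EuclideanSpace ℝ (Fin d), ‖F x u‖) = u ^ (α / 2 - 1) * Real.exp (-((4 * π)⁻¹ * u)) := by
    intro u hu
    have hu0 : (0:ℝ) < u := hu
    have h1 : (∫ x : EuclideanSpace ℝ (Fin d), ‖F x u‖) = ∫ x : EuclideanSpace ℝ (Fin d), Real.exp (-(π / u) * ‖x‖ ^ 2) * K u := by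
      refine integral_congr_ae (Filter.Eventually.of_forall fun x => ?_)
      simp only [hF, hK]
      rw [show -(π / u) * ‖x‖ ^ 2 = -π * ‖x‖ ^ 2 / u by ring]
      rw [Real.norm_eq_abs, _root_.abs_of_nonneg (by positivity)]
      ring
    rw [h1, integral_mul_const, GaussianFourier.integral_rexp_neg_mul_sq_norm
      (div_pos pi_pos hu0)]
    have hπu : π / (π / u) = u := by field_simp
    rw [hπu, finrank_euclideanSpace_fin, hK]
    rw [show u ^ ((d:ℝ) / 2) * (Real.exp (-u / (4 * π)) * u ^ ((α - d) / 2 - 1))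
        = (u ^ ((d:ℝ) / 2) * u ^ ((α - d) / 2 - 1)) * Real.exp (-u / (4 * π)) by ring]
    rw [← Real.rpow_add hu0]
    congr 1
    · congr 1
      push_cast
      ring
    · congr 1
      ring
  -- product integrability
  have hprod : Integrable (fun p : EuclideanSpace ℝ (Fin d) × ℝ => F p.1 p.2) (volume.prod ν) := by
    rw [integrable_prod_iff' hmeas.aestronglyMeasurable]
    constructor
    · exact (ae_restrict_mem measurableSet_Ioi).mono fun u hu => hFint u hu
    · have h := besselAux_gammaIntegrable hα2 (show (0:ℝ) < (4 * π)⁻¹ by positivity)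
      exact IntegrableOn.congr_fun h (fun u hu => ((hFnorm u hu).symm)) measurableSet_Ioi
  have hIG : Integrable G := by
    have h := (hprod.integral_prod_left).const_mul c
    exact h.congr (Filter.Eventually.of_forall fun x => (hG x).symm)
  refine ⟨hIG, fun ξ => ?_⟩
  set r : ℝ := (4 * π)⁻¹ + π * ‖ξ‖ ^ 2 with hrdef
  have hr0 : 0 < r := by positivity
  have hΓ : Real.Gamma (α / 2) ≠ 0 := (Real.Gamma_pos_of_pos hα2).ne'
  set e : EuclideanSpace ℝ (Fin d) → ℂ :=
    fun x => Complex.exp (((-2 * π * ⟪x, ξ⟫ : ℝ) : ℂ) * Complex.I) with he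
  have hnorme : ∀ x, ‖e x‖ = 1 := fun x => by
    simp only [he, Complex.norm_exp_ofReal_mul_I]
  have hecont : Continuous e := by
    apply Complex.continuous_exp.comp
    apply Continuous.mul _ continuous_const
    exact Complex.continuous_ofReal.comp
      (continuous_const.mul (continuous_id.inner continuous_const))
  have hPint : Integrable
      (fun p : EuclideanSpace ℝ (Fin d) × ℝ => e p.1 * (F p.1 p.2 : ℂ)) (volume.prod ν) := by
    refine Integrable.mono' hprod.norm
      (((hecont.comp continuous_fst).aestronglyMeasurable).mul
        ((Complex.measurable_ofReal.comp hmeas).aestronglyMeasurable))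
      (Filter.Eventually.of_forall fun p => ?_)
    rw [norm_mul, hnorme, one_mul, Complex.norm_real]
  -- inner x-integral for fixed u > 0
  have hxint : ∀ u ∈ Set.Ioi (0:ℝ),
      (∫ x : EuclideanSpace ℝ (Fin d), e x * (F x u : ℂ))
        = ((u ^ ((d:ℝ) / 2) * Real.exp (-(π * ‖ξ‖ ^ 2 * u)) * K u : ℝ) : ℂ) := by
    intro u hu
    have hu0 : (0:ℝ) < u := hu
    have hb : (0:ℝ) < π / u := div_pos pi_pos hu0
    set b : ℂ := ((π / u : ℝ) : ℂ) with hbdef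
    have step1 : (∫ x : EuclideanSpace ℝ (Fin d), e x * (F x u : ℂ))
        = (∫ x : EuclideanSpace ℝ (Fin d), e x * Complex.exp (-b * (‖x‖ : ℂ) ^ 2)) * (K u : ℂ) := by
      rw [← integral_mul_const]
      refine integral_congr_ae (Filter.Eventually.of_forall fun x => ?_)
      simp only [hF, hK]
      push_cast
      rw [show -(π:ℂ) * (‖x‖:ℂ) ^ 2 / (u:ℂ) = -b * (‖x‖:ℂ) ^ 2 from by
        rw [hbdef]; push_cast; field_simp]
      ring
    have step2 : (∫ x : EuclideanSpace ℝ (Fin d), e x * Complex.exp (-b * (‖x‖ : ℂ) ^ 2))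
        = ((u ^ ((d:ℝ) / 2) * Real.exp (-(π * ‖ξ‖ ^ 2 * u)) : ℝ) : ℂ) := by
      have hfour := fourier_gaussian_innerProductSpace
        (V := EuclideanSpace ℝ (Fin d)) (b := b) (by simp [hbdef, hb]) ξ
      rw [Real.fourier_eq'] at hfour
      simp only [smul_eq_mul] at hfour
      have hL : (∫ x : EuclideanSpace ℝ (Fin d), e x * Complex.exp (-b * (‖x‖ : ℂ) ^ 2))
          = ∫ v : EuclideanSpace ℝ (Fin d),
              Complex.exp (((-2 * π * ⟪v, ξ⟫ : ℝ) : ℂ) * Complex.I)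
                * Complex.exp (-b * (‖v‖ : ℂ) ^ 2) := rfl
      rw [hL]
      rw [show (∫ v : EuclideanSpace ℝ (Fin d),
              Complex.exp (((-2 * π * ⟪v, ξ⟫ : ℝ) : ℂ) * Complex.I)
                * Complex.exp (-b * (‖v‖ : ℂ) ^ 2))
          = ((π : ℂ) / b) ^ ((Module.finrank ℝ (EuclideanSpace ℝ (Fin d)) : ℂ) / 2)
              * Complex.exp (-(π:ℂ) ^ 2 * (‖ξ‖:ℂ) ^ 2 / b) from by
        rw [← hfour]]
      have h1 : ((π : ℂ) / b) = (u : ℂ) := by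
        have hπ : (π : ℂ) ≠ 0 := Complex.ofReal_ne_zero.mpr pi_ne_zero
        have hu' : (u : ℂ) ≠ 0 := Complex.ofReal_ne_zero.mpr hu0.ne'
        rw [hbdef]
        push_cast
        field_simp
      have h2 : ((u : ℂ)) ^ ((Module.finrank ℝ (EuclideanSpace ℝ (Fin d)) : ℂ) / 2)
          = ((u ^ ((d:ℝ) / 2) : ℝ) : ℂ) := by
        rw [finrank_euclideanSpace_fin, Complex.ofReal_cpow hu0.le]
        push_cast
        ring_nf
      have h3 : Complex.exp (-(π:ℂ) ^ 2 * (‖ξ‖:ℂ) ^ 2 / b)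
          = ((Real.exp (-(π * ‖ξ‖ ^ 2 * u)) : ℝ) : ℂ) := by
        rw [Complex.ofReal_exp]
        congr 1
        rw [hbdef]
        push_cast
        have hπ : (π : ℂ) ≠ 0 := Complex.ofReal_ne_zero.mpr pi_ne_zero
        have hu' : (u : ℂ) ≠ 0 := Complex.ofReal_ne_zero.mpr hu0.ne'
        field_simp
      rw [h1, h2, h3, ← Complex.ofReal_mul]
    rw [step1, step2, ← Complex.ofReal_mul]
  -- main computation
  calc FourierTransform.fourier (fun x => (G x : ℂ)) ξ
      = ∫ x, e x * (G x : ℂ) := by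
        rw [Real.fourier_eq']
        simp only [smul_eq_mul, he]
    _ = (c : ℂ) * ∫ x, ∫ u, e x * (F x u : ℂ) ∂ν := by
        rw [← integral_const_mul]
        refine integral_congr_ae (Filter.Eventually.of_forall fun x => ?_)
        simp only [hG x]
        push_cast
        rw [← besselAux_ofReal_integral]
        rw [integral_const_mul (e x) fun u => ((F x u : ℝ) : ℂ)]
        ring
    _ = (c : ℂ) * ∫ u, (∫ x, e x * (F x u : ℂ)) ∂ν := by
        rw [integral_integral_swap hPint]
    _ = (c : ℂ) * ∫ u in Set.Ioi (0:ℝ),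
          ((u ^ ((d:ℝ) / 2) * Real.exp (-(π * ‖ξ‖ ^ 2 * u)) * K u : ℝ) : ℂ) := by
        rw [hν]
        congr 1
        exact setIntegral_congr_fun measurableSet_Ioi fun u hu => hxint u hu
    _ = (c : ℂ) * ((∫ u in Set.Ioi (0:ℝ), u ^ (α / 2 - 1) * Real.exp (-(r * u)) : ℝ) : ℂ) := by
        rw [besselAux_ofReal_integral]
        congr 2
        refine setIntegral_congr_fun measurableSet_Ioi fun u hu => ?_
        have hu0 : (0:ℝ) < u := hu
        simp only [hK]
        rw [show u ^ ((d:ℝ) / 2) * Real.exp (-(π * ‖ξ‖ ^ 2 * u))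
              * (Real.exp (-u / (4 * π)) * u ^ ((α - d) / 2 - 1))
            = (u ^ ((d:ℝ) / 2) * u ^ ((α - d) / 2 - 1))
              * (Real.exp (-(π * ‖ξ‖ ^ 2 * u)) * Real.exp (-u / (4 * π))) by ring]
        rw [← Real.rpow_add hu0, ← Real.exp_add]
        congr 1
        · congr 1
          ring
        · congr 1
          rw [hrdef]
          field_simp
          ring
    _ = ((c * ((1 / r) ^ (α / 2) * Real.Gamma (α / 2)) : ℝ) : ℂ) := by
        rw [integral_rpow_mul_exp_neg_mul_Ioi hα2 hr0]
        push_cast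
        ring
    _ = (((1 + 4 * π ^ 2 * ‖ξ‖ ^ 2) ^ (-α / 2) : ℝ) : ℂ) := by
        congr 1
        rw [hc, one_div, Real.inv_rpow hr0.le, ← Real.rpow_neg hr0.le]
        rw [show (4 * π) ^ (-α / 2) * (Real.Gamma (α / 2))⁻¹ * (r ^ (-(α / 2)) * Real.Gamma (α / 2))
            = (4 * π) ^ (-α / 2) * r ^ (-(α / 2)) * ((Real.Gamma (α / 2))⁻¹ * Real.Gamma (α / 2)) by ring]
        rw [inv_mul_cancel₀ hΓ, mul_one, neg_div, ← Real.mul_rpow (by positivity) hr0.le]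
        congr 1
        rw [hrdef]
        field_simp
end

section
/- Let d ≥ 1, α > 0 and κ > 0, and define the Matérn kernel G_{κ,α} : ℝ^d → ℝ by G_{κ,α}(x) := Γ(α/2)^{−1} ∫₀^∞ (4πs)^{−d/2} e^{−|x|²/(4s)} e^{−κ²s} s^{α/2 − 1} ds. Then G_{κ,α} is integrable on ℝ^d with ∫_{ℝ^d} G_{κ,α}(x) dx = κ^{−α}, and its Fourier transform satisfies 𝓕G_{κ,α}(ξ) = (κ² + 4π²|ξ|²)^{−α/2} for all ξ ∈ ℝ^d. -/
open MeasureTheory Real Set Filter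
open scoped RealInnerProductSpace

namespace MaternAux

variable {d : ℕ}

lemma gauss_integrable {b : ℝ} (hb : 0 < b) :
    Integrable (fun x : EuclideanSpace ℝ (Fin d) => rexp (-b * ‖x‖ ^ 2)) := by
  have h := (GaussianFourier.integrable_cexp_neg_mul_sq_norm_add
      (V := EuclideanSpace ℝ (Fin d)) (b := (b : ℂ)) (by simpa using hb) 0 0).norm
  refine h.congr (Eventually.of_forall fun x => ?_)
  simp only [Complex.norm_exp]
  congr 1
  simp [Complex.add_re, Complex.mul_re, ← Complex.ofReal_pow]

lemma gauss_integral {s : ℝ} (hs : 0 < s) :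
    ∫ x : EuclideanSpace ℝ (Fin d), rexp (-‖x‖ ^ 2 / (4 * s)) = (4 * π * s) ^ ((d : ℝ) / 2) := by
  have hb : (0 : ℝ) < (4 * s)⁻¹ := by positivity
  have h := GaussianFourier.integral_rexp_neg_mul_sq_norm (V := EuclideanSpace ℝ (Fin d)) hb
  rw [finrank_euclideanSpace_fin] at h
  have h1 : ∀ x : EuclideanSpace ℝ (Fin d), -‖x‖ ^ 2 / (4 * s) = -(4 * s)⁻¹ * ‖x‖ ^ 2 := by
    intro x; field_simp
  have h2 : π / (4 * s)⁻¹ = 4 * π * s := by field_simp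
  simp_rw [h1, h, h2]

lemma gauss_fourier {s : ℝ} (hs : 0 < s) (ξ : EuclideanSpace ℝ (Fin d)) :
    FourierTransform.fourier (fun x : EuclideanSpace ℝ (Fin d) => (rexp (-‖x‖ ^ 2 / (4 * s)) : ℂ)) ξ
      = (((4 * π * s) ^ ((d : ℝ) / 2) * rexp (-(4 * π ^ 2 * ‖ξ‖ ^ 2) * s) : ℝ) : ℂ) := by
  have hb : (0 : ℝ) < (4 * s)⁻¹ := by positivity
  have h := fourier_gaussian_innerProductSpace (V := EuclideanSpace ℝ (Fin d))
      (b := ((4 * s)⁻¹ : ℂ)) (by simpa using hb) ξ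
  rw [finrank_euclideanSpace_fin] at h
  have heq : (fun x : EuclideanSpace ℝ (Fin d) => (rexp (-‖x‖ ^ 2 / (4 * s)) : ℂ))
      = fun v : EuclideanSpace ℝ (Fin d) => Complex.exp (-((4 * s)⁻¹ : ℂ) * ‖v‖ ^ 2) := by
    funext v
    rw [Complex.ofReal_exp]
    congr 1
    push_cast
    field_simp
  rw [heq, h]
  have h2 : ((π : ℂ) / ((4 * s)⁻¹ : ℂ)) = ((4 * π * s : ℝ) : ℂ) := by
    push_cast; field_simp
  have h3 : (-(π : ℂ) ^ 2 * (‖ξ‖ : ℂ) ^ 2 / ((4 * s)⁻¹ : ℂ)) = ((-(4 * π ^ 2 * ‖ξ‖ ^ 2) * s : ℝ) : ℂ) := by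
    push_cast; field_simp
  rw [h2, h3, ← Complex.ofReal_exp]
  have h4 : ((4 * π * s : ℝ) : ℂ) ^ ((d : ℂ) / 2) = (((4 * π * s) ^ ((d : ℝ) / 2) : ℝ) : ℂ) := by
    rw [Complex.ofReal_cpow (by positivity)]
    norm_num
  rw [h4, ← Complex.ofReal_mul]

lemma time_integral {a c : ℝ} (ha : 0 < a) (hc : 0 < c) :
    ∫ s in Ioi (0 : ℝ), rexp (-(c * s)) * s ^ (a - 1) = Real.Gamma a * c ^ (-a) := by
  have h := Real.integral_rpow_mul_exp_neg_mul_Ioi ha hc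
  simp_rw [mul_comm (rexp _)] at *
  rw [h, one_div, Real.inv_rpow hc.le, ← Real.rpow_neg hc.le, mul_comm]

lemma time_integrable {a c : ℝ} (ha : 0 < a) (hc : 0 < c) :
    IntegrableOn (fun s : ℝ => rexp (-(c * s)) * s ^ (a - 1)) (Ioi 0) := by
  have h := integrableOn_rpow_mul_exp_neg_mul_rpow (p := 1) (s := a - 1) (b := c)
      (by linarith) one_pos hc
  refine h.congr_fun (fun s hs => ?_) measurableSet_Ioi
  dsimp only
  rw [Real.rpow_one, mul_comm, neg_mul]

end MaternAux

open MaternAux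

/-- The Matérn kernel `G_{κ,α}` is integrable on `ℝ^d` with total integral `κ^{-α}`, and its
Fourier transform is `ξ ↦ (κ² + 4π²|ξ|²)^{-α/2}`. -/
theorem maternKernel_integrable_and_fourier (d : ℕ) (hd : 1 ≤ d) (α κ : ℝ)
    (hα : 0 < α) (hκ : 0 < κ) (G : EuclideanSpace ℝ (Fin d) → ℝ)
    (hG : ∀ x, G x = (Real.Gamma (α / 2))⁻¹ *
      ∫ s in Set.Ioi (0 : ℝ),
        (4 * π * s) ^ (-(d : ℝ) / 2) * Real.exp (-‖x‖ ^ 2 / (4 * s)) *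
          Real.exp (-κ ^ 2 * s) * s ^ (α / 2 - 1)) :
    Integrable G ∧ (∫ x, G x) = κ ^ (-α) ∧
      ∀ ξ : EuclideanSpace ℝ (Fin d),
        FourierTransform.fourier (fun x => (G x : ℂ)) ξ
          = ((κ ^ 2 + 4 * π ^ 2 * ‖ξ‖ ^ 2) ^ (-α / 2) : ℝ) := by
  have ha : 0 < α / 2 := by linarith
  have hΓ : 0 < Real.Gamma (α / 2) := Real.Gamma_pos_of_pos ha
  have hκ2 : (0 : ℝ) < κ ^ 2 := pow_pos hκ 2
  set ν : Measure ℝ := volume.restrict (Set.Ioi (0 : ℝ)) with hν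
  set F : EuclideanSpace ℝ (Fin d) × ℝ → ℝ := fun p =>
    (4 * π * p.2) ^ (-(d : ℝ) / 2) * rexp (-‖p.1‖ ^ 2 / (4 * p.2)) *
      rexp (-κ ^ 2 * p.2) * p.2 ^ (α / 2 - 1) with hF
  have hFmeas : Measurable F := by
    apply Measurable.mul
    apply Measurable.mul
    apply Measurable.mul
    · exact (measurable_const.mul measurable_snd).pow measurable_const
    · exact (((measurable_fst.norm.pow measurable_const).neg).div
        (measurable_const.mul measurable_snd)).exp
    · exact (measurable_const.mul measurable_snd).exp
    · exact measurable_snd.pow measurable_const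
  -- slice integrability in x
  have hslice : ∀ s : ℝ, 0 < s → Integrable (fun x => F (x, s)) := by
    intro s hs
    have hb : (0 : ℝ) < (4 * s)⁻¹ := by positivity
    have h := (gauss_integrable (d := d) hb).const_mul
        ((4 * π * s) ^ (-(d : ℝ) / 2) * rexp (-κ ^ 2 * s) * s ^ (α / 2 - 1))
    refine h.congr (Eventually.of_forall fun x => ?_)
    have harg : -(4 * s)⁻¹ * ‖x‖ ^ 2 = -‖x‖ ^ 2 / (4 * s) := by field_simp
    simp only [hF, harg]
    ring
  -- slice integral value
  have hsliceval : ∀ s : ℝ, 0 < s →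
      (∫ x, F (x, s)) = rexp (-κ ^ 2 * s) * s ^ (α / 2 - 1) := by
    intro s hs
    have h4 : (0 : ℝ) < 4 * π * s := by positivity
    have hXne : ((4 * π * s) ^ ((d : ℝ) / 2)) ≠ 0 := (Real.rpow_pos_of_pos h4 _).ne'
    have heq : (fun x : EuclideanSpace ℝ (Fin d) => F (x, s))
        = fun x => ((4 * π * s) ^ (-(d : ℝ) / 2) * rexp (-κ ^ 2 * s) * s ^ (α / 2 - 1)) *
            rexp (-‖x‖ ^ 2 / (4 * s)) := by
      funext x; simp only [hF]; ring
    rw [heq, integral_const_mul, gauss_integral hs]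
    rw [neg_div, Real.rpow_neg h4.le]
    field_simp
  -- nonnegativity on slices
  have hpos : ∀ s : ℝ, 0 < s → ∀ x : EuclideanSpace ℝ (Fin d), 0 ≤ F (x, s) := by
    intro s hs x
    simp only [hF]
    positivity
  -- the norm-integral function in s is integrable
  have hnorm_int : Integrable (fun s => ∫ x, ‖F (x, s)‖) ν := by
    have hti := time_integrable ha hκ2
    refine hti.congr ((ae_restrict_iff' measurableSet_Ioi).2
      (Eventually.of_forall fun s hs => ?_))
    have h1 : (fun x : EuclideanSpace ℝ (Fin d) => ‖F (x, s)‖) = fun x => F (x, s) := by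
      funext x
      exact abs_of_nonneg (hpos s hs x)
    show rexp (-(κ ^ 2 * s)) * s ^ (α / 2 - 1) = ∫ x, ‖F (x, s)‖
    rw [h1, hsliceval s hs, neg_mul]
  have hFae : AEStronglyMeasurable F (volume.prod ν) := hFmeas.aestronglyMeasurable
  have hFint : Integrable F (volume.prod ν) := by
    rw [integrable_prod_iff' hFae]
    exact ⟨(ae_restrict_iff' measurableSet_Ioi).2
      (Eventually.of_forall fun s hs => hslice s hs), hnorm_int⟩
  have hGrep : G = fun x => (Real.Gamma (α / 2))⁻¹ * ∫ s, F (x, s) ∂ν := by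
    funext x
    rw [hG x]
  have hGint : Integrable G := by
    rw [hGrep]
    exact hFint.integral_prod_left.const_mul _
  have hswap := MeasureTheory.integral_integral_swap (f := fun x s => F (x, s))
      (μ := volume) (ν := ν) hFint
  have hinner : (∫ s, (∫ x, F (x, s)) ∂ν) = Real.Gamma (α / 2) * (κ ^ 2) ^ (-(α / 2)) := by
    rw [hν, ← time_integral ha hκ2]
    refine setIntegral_congr_fun measurableSet_Ioi fun s hs => ?_
    rw [hsliceval s hs, neg_mul]
  have hκexp : (κ ^ 2 : ℝ) ^ (-(α / 2)) = κ ^ (-α) := by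
    rw [← Real.rpow_natCast κ 2, ← Real.rpow_mul hκ.le]
    congr 1
    push_cast
    ring
  refine ⟨hGint, ?_, ?_⟩
  · rw [hGrep]
    rw [integral_const_mul, hswap, hinner, ← mul_assoc, inv_mul_cancel₀ hΓ.ne', one_mul, hκexp]
  · intro ξ
    set c₁ : ℝ := κ ^ 2 + 4 * π ^ 2 * ‖ξ‖ ^ 2 with hc₁def
    have hc₁ : 0 < c₁ := add_pos_of_pos_of_nonneg hκ2 (by positivity)
    set Fc : EuclideanSpace ℝ (Fin d) × ℝ → ℂ := fun p =>
      Complex.exp ((↑(-2 * π * ⟪p.1, ξ⟫) * Complex.I)) * (F p : ℂ) with hFc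
    have hFc_meas : AEStronglyMeasurable Fc (volume.prod ν) := by
      apply Measurable.aestronglyMeasurable
      apply Measurable.mul
      · apply Complex.measurable_exp.comp
        apply Measurable.mul _ measurable_const
        exact Complex.measurable_ofReal.comp
          ((continuous_const.mul ((continuous_fst.inner continuous_const))).measurable)
      · exact Complex.measurable_ofReal.comp hFmeas
    have hFc_int : Integrable Fc (volume.prod ν) := by
      refine hFint.norm.mono' hFc_meas (Eventually.of_forall fun p => ?_)
      rw [hFc]
      simp only [norm_mul, Complex.norm_exp]
      simp [Complex.norm_real]
    rw [Real.fourier_eq']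
    have hcast : ∀ g : ℝ → ℝ, (∫ s, ((g s : ℝ) : ℂ) ∂ν) = ((∫ s, g s ∂ν : ℝ) : ℂ) :=
      fun g => integral_ofReal
    have hGx : ∀ x : EuclideanSpace ℝ (Fin d),
        ((G x : ℝ) : ℂ) = ((Real.Gamma (α / 2) : ℝ) : ℂ)⁻¹ * ∫ s, ((F (x, s) : ℝ) : ℂ) ∂ν := by
      intro x
      rw [hcast (fun s => F (x, s)), hGrep]
      push_cast
      ring
    have key : (fun x : EuclideanSpace ℝ (Fin d) =>
          Complex.exp ((↑(-2 * π * ⟪x, ξ⟫) * Complex.I)) • ((G x : ℝ) : ℂ))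
        = fun x => ((Real.Gamma (α / 2) : ℝ) : ℂ)⁻¹ * ∫ s, Fc (x, s) ∂ν := by
      funext x
      rw [smul_eq_mul, hGx x, mul_left_comm, ← integral_const_mul]
    rw [key, integral_const_mul, MeasureTheory.integral_integral_swap
      (f := fun x s => Fc (x, s)) (μ := volume) (ν := ν) hFc_int]
    have hinner2 : (∫ s, (∫ x, Fc (x, s)) ∂ν)
        = ((Real.Gamma (α / 2) * c₁ ^ (-(α / 2)) : ℝ) : ℂ) := by
      rw [hν] at hcast ⊢
      rw [← time_integral ha hc₁,
        ← hcast (fun s => rexp (-(c₁ * s)) * s ^ (α / 2 - 1))]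
      refine setIntegral_congr_fun measurableSet_Ioi fun s hs => ?_
      have hs' : (0 : ℝ) < s := hs
      have h4 : (0 : ℝ) < 4 * π * s := by positivity
      have heq : (fun x : EuclideanSpace ℝ (Fin d) => Fc (x, s))
          = fun x => (((4 * π * s) ^ (-(d : ℝ) / 2) * rexp (-κ ^ 2 * s) * s ^ (α / 2 - 1) : ℝ) : ℂ) *
              (Complex.exp ((↑(-2 * π * ⟪x, ξ⟫) * Complex.I)) •
                ((rexp (-‖x‖ ^ 2 / (4 * s)) : ℝ) : ℂ)) := by
        funext x
        simp only [hFc, hF, smul_eq_mul]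
        push_cast
        ring
      rw [heq, integral_const_mul, ← Real.fourier_eq', gauss_fourier hs ξ,
        ← Complex.ofReal_mul]
      congr 1
      have hprod : (4 * π * s) ^ (-(d : ℝ) / 2) * (4 * π * s) ^ ((d : ℝ) / 2) = 1 := by
        rw [← Real.rpow_add h4, show -(d : ℝ) / 2 + (d : ℝ) / 2 = 0 by ring, Real.rpow_zero]
      have hexp : rexp (-κ ^ 2 * s) * rexp (-(4 * π ^ 2 * ‖ξ‖ ^ 2) * s) = rexp (-(c₁ * s)) := by
        rw [← Real.exp_add]
        congr 1
        rw [hc₁def]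
        ring
      calc (4 * π * s) ^ (-(d : ℝ) / 2) * rexp (-κ ^ 2 * s) * s ^ (α / 2 - 1) *
            ((4 * π * s) ^ ((d : ℝ) / 2) * rexp (-(4 * π ^ 2 * ‖ξ‖ ^ 2) * s))
          = ((4 * π * s) ^ (-(d : ℝ) / 2) * (4 * π * s) ^ ((d : ℝ) / 2)) *
            (rexp (-κ ^ 2 * s) * rexp (-(4 * π ^ 2 * ‖ξ‖ ^ 2) * s)) * s ^ (α / 2 - 1) := by ring
        _ = rexp (-(c₁ * s)) * s ^ (α / 2 - 1) := by rw [hprod, hexp, one_mul]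
    rw [hinner2, Complex.ofReal_mul, ← mul_assoc,
      inv_mul_cancel₀ (by exact_mod_cast hΓ.ne' : ((Real.Gamma (α / 2) : ℝ) : ℂ) ≠ 0), one_mul]
    rw [show -α / 2 = -(α / 2) by ring]
end

section
/- (The Matérn correlation is the Fourier transform of a Student-type spectral density.) Let d ≥ 1, ν > 0 and κ > 0. Then there exists a constant c > 0, depending only on d, ν and κ, such that for every s ∈ ℝ^d with s ≠ 0, ∫_{ℝ^d} e^{i⟨s,x⟩} (κ² + |x|²)^{−(2ν+d)/2} dx = c · (κ|s|)^ν K_ν(κ|s|), where K_ν(x) := (1/2) ∫₀^∞ u^{ν−1} exp(−x(u + 1/u)/2) du. -/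
open MeasureTheory Real

/-- The Macdonald function (modified Bessel function of the second kind), via the integral
representation `K_ν(x) = (1/2) ∫₀^∞ u^{ν-1} exp(-x(u + 1/u)/2) du`. -/
noncomputable def macdonaldK (ν x : ℝ) : ℝ :=
  (1 / 2) * ∫ u in Set.Ioi (0 : ℝ), u ^ (ν - 1) * Real.exp (-x * (u + 1 / u) / 2)

lemma integral_ofReal' {X : Type*} [MeasurableSpace X] {μ : MeasureTheory.Measure X} (f : X → ℝ) :
    ∫ x, ((f x : ℝ) : ℂ) ∂μ = ((∫ x, f x ∂μ : ℝ) : ℂ) := integral_ofReal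

/-- (The Matérn correlation is the Fourier transform of a Student-type spectral density.)
There is a constant `c > 0` (depending only on `d`, `ν`, `κ`) such that for all `s ≠ 0`,
`∫ e^{i⟨s,x⟩} (κ² + |x|²)^{-(2ν+d)/2} dx = c (κ|s|)^ν K_ν(κ|s|)`. -/
theorem matern_fourier_student (d : ℕ) (hd : 1 ≤ d) (ν κ : ℝ) (hν : 0 < ν) (hκ : 0 < κ) :
    ∃ c : ℝ, 0 < c ∧ ∀ s : EuclideanSpace ℝ (Fin d), s ≠ 0 →
      (∫ x : EuclideanSpace ℝ (Fin d),
          Complex.exp (Complex.I * ((inner ℝ s x : ℝ) : ℂ)) *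
            (((κ ^ 2 + ‖x‖ ^ 2) ^ (-(2 * ν + d) / 2) : ℝ) : ℂ))
        = ((c * (κ * ‖s‖) ^ ν * macdonaldK ν (κ * ‖s‖) : ℝ) : ℂ) := by
  have hα0 : (0:ℝ) < ν + (d:ℝ) / 2 := by positivity
  set α : ℝ := ν + (d:ℝ) / 2 with hαdef
  have hΓ : 0 < Real.Gamma α := Real.Gamma_pos_of_pos hα0
  refine ⟨2 * π ^ ((d:ℝ)/2) / (Real.Gamma α * (2*κ^2) ^ ν), by positivity, ?_⟩
  intro s hs
  have hsn : 0 < ‖s‖ := norm_pos_iff.mpr hs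
  set β : ℝ := ‖s‖ / (2*κ) with hβdef
  have hβ : 0 < β := by positivity
  set F : EuclideanSpace ℝ (Fin d) → ℝ → ℂ := fun x t =>
    Complex.exp (Complex.I * ((inner ℝ s x : ℝ) : ℂ)) *
      ((t ^ (α-1) * Real.exp (-((κ^2 + ‖x‖^2) * t)) : ℝ) : ℂ) with hF
  -- pointwise Gaussian form of F
  have hFeq : ∀ (t : ℝ) (x : EuclideanSpace ℝ (Fin d)),
      ((t ^ (α-1) * Real.exp (-(κ^2*t)) : ℝ) : ℂ) *
        Complex.exp (-(t:ℂ) * (‖x‖:ℂ)^2 + Complex.I * ((inner ℝ s x : ℝ):ℂ)) = F x t := by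
    intro t x
    rw [Complex.exp_add]
    have h1 : (-(t:ℂ) * (‖x‖:ℂ)^2) = ((-(t*‖x‖^2) : ℝ) : ℂ) := by push_cast; ring
    rw [h1, ← Complex.ofReal_exp]
    have h2 : (t ^ (α-1) * Real.exp (-(κ^2*t))) * Real.exp (-(t*‖x‖^2))
        = t ^ (α-1) * Real.exp (-((κ^2 + ‖x‖^2) * t)) := by
      rw [mul_assoc, ← Real.exp_add, show (-(κ^2*t) + -(t*‖x‖^2)) = -((κ^2+‖x‖^2)*t) by ring]
    calc ((t ^ (α-1) * Real.exp (-(κ^2*t)) : ℝ) : ℂ) * (((Real.exp (-(t*‖x‖^2)) : ℝ):ℂ) *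
          Complex.exp (Complex.I * ((inner ℝ s x : ℝ):ℂ)))
        = (((t ^ (α-1) * Real.exp (-(κ^2*t))) * Real.exp (-(t*‖x‖^2)) : ℝ) : ℂ) *
          Complex.exp (Complex.I * ((inner ℝ s x : ℝ):ℂ)) := by push_cast; ring
      _ = F x t := by rw [h2, hF]; ring
  -- Step 1: Gamma representation
  have step1 : ∀ x : EuclideanSpace ℝ (Fin d),
      Complex.exp (Complex.I * ((inner ℝ s x : ℝ) : ℂ)) *
        (((κ ^ 2 + ‖x‖ ^ 2) ^ (-(2 * ν + d) / 2) : ℝ) : ℂ)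
      = (((Real.Gamma α)⁻¹ : ℝ) : ℂ) * ∫ t in Set.Ioi (0:ℝ), F x t := by
    intro x
    have hr : (0:ℝ) < κ^2 + ‖x‖^2 := by positivity
    have hint : ∫ t in Set.Ioi (0:ℝ), t ^ (α-1) * Real.exp (-((κ^2+‖x‖^2) * t))
        = (1/(κ^2+‖x‖^2)) ^ α * Real.Gamma α :=
      integral_rpow_mul_exp_neg_mul_Ioi hα0 hr
    have h2 : ∫ t in Set.Ioi (0:ℝ), F x t
        = Complex.exp (Complex.I * ((inner ℝ s x : ℝ) : ℂ)) *
          (((1/(κ^2+‖x‖^2)) ^ α * Real.Gamma α : ℝ) : ℂ) := by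
      rw [hF, MeasureTheory.integral_const_mul, integral_ofReal' (fun a => a ^ (α-1) * Real.exp (-((κ^2+‖x‖^2) * a))), hint]
    rw [h2]
    have h3 : ((κ ^ 2 + ‖x‖ ^ 2) ^ (-(2 * ν + (d:ℝ)) / 2) : ℝ)
        = (Real.Gamma α)⁻¹ * ((1/(κ^2+‖x‖^2)) ^ α * Real.Gamma α) := by
      rw [show (-(2 * ν + (d:ℝ)) / 2) = -α by rw [hαdef]; ring, Real.rpow_neg hr.le,
        one_div, Real.inv_rpow hr.le]
      field_simp
    rw [h3]
    push_cast
    ring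
  -- Integrability on the product (t, x)
  have hmeas : AEStronglyMeasurable (fun p : ℝ × EuclideanSpace ℝ (Fin d) => F p.2 p.1)
      ((volume.restrict (Set.Ioi 0)).prod volume) := by
    apply Measurable.aestronglyMeasurable
    rw [hF]
    have m1 : Measurable fun p : ℝ × EuclideanSpace ℝ (Fin d) => (inner ℝ s p.2 : ℝ) :=
      (Continuous.inner continuous_const continuous_snd).measurable
    have m2 : Measurable fun p : ℝ × EuclideanSpace ℝ (Fin d) =>
        Complex.exp (Complex.I * ((inner ℝ s p.2 : ℝ) : ℂ)) :=
      Complex.measurable_exp.comp ((Complex.measurable_ofReal.comp m1).const_mul Complex.I)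
    have m3 : Measurable fun p : ℝ × EuclideanSpace ℝ (Fin d) => p.1 ^ (α-1) := by
      fun_prop
    have m4 : Measurable fun p : ℝ × EuclideanSpace ℝ (Fin d) =>
        Real.exp (-((κ^2 + ‖p.2‖^2) * p.1)) :=
      Real.measurable_exp.comp
        (((measurable_const.add ((measurable_snd.norm).pow measurable_const)).mul
          measurable_fst).neg)
    exact m2.mul (Complex.measurable_ofReal.comp (m3.mul m4))
  have hnorm : ∀ t ∈ Set.Ioi (0:ℝ), ∀ x : EuclideanSpace ℝ (Fin d),
      ‖F x t‖ = (t ^ (α-1) * Real.exp (-(κ^2*t))) * Real.exp (-(t * ‖x‖^2)) := by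
    intro t ht x
    have ht' : (0:ℝ) < t := ht
    rw [hF]
    have h1 : ‖Complex.exp (Complex.I * ((inner ℝ s x : ℝ) : ℂ))‖ = 1 := by
      rw [mul_comm]
      exact Complex.norm_exp_ofReal_mul_I _
    simp only [norm_mul, Complex.norm_real, Real.norm_eq_abs, h1, one_mul, Real.abs_exp,
      abs_of_nonneg (Real.rpow_nonneg ht'.le _)]
    rw [mul_assoc, ← Real.exp_add, show (-(κ^2*t) + -(t*‖x‖^2)) = -((κ^2+‖x‖^2)*t) by ring]
  have hGauss : ∀ t ∈ Set.Ioi (0:ℝ),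
      ∫ x : EuclideanSpace ℝ (Fin d), Real.exp (-(t * ‖x‖^2))
        = (π / t) ^ ((d:ℝ)/2) := by
    intro t ht
    have := GaussianFourier.integral_rexp_neg_mul_sq_norm
      (V := EuclideanSpace ℝ (Fin d)) (b := t) ht
    rw [finrank_euclideanSpace_fin] at this
    simpa [neg_mul] using this
  have hG : Integrable (fun p : ℝ × EuclideanSpace ℝ (Fin d) => F p.2 p.1)
      ((volume.restrict (Set.Ioi 0)).prod volume) := by
    rw [MeasureTheory.integrable_prod_iff hmeas]
    constructor
    · filter_upwards [ae_restrict_mem measurableSet_Ioi] with t ht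
      have h0 : (0:ℝ) < ((t:ℂ)).re := by simpa using ht
      have hi := (GaussianFourier.integrable_cexp_neg_mul_sq_norm_add
        (V := EuclideanSpace ℝ (Fin d)) h0 Complex.I s).const_mul
        ((t ^ (α-1) * Real.exp (-(κ^2*t)) : ℝ) : ℂ)
      exact hi.congr (Filter.Eventually.of_forall fun x => hFeq t x)
    · have hIntg : IntegrableOn
          (fun t : ℝ => (t ^ (α-1) * Real.exp (-(κ^2*t))) * (π / t) ^ ((d:ℝ)/2))
          (Set.Ioi 0) := by
        have base : IntegrableOn (fun t : ℝ => π ^ ((d:ℝ)/2) * (t ^ (ν-1) * Real.exp (-(κ^2*t))))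
            (Set.Ioi 0) := by
          have h := (integrableOn_rpow_mul_exp_neg_mul_rpow
            (s := ν - 1) (p := 1) (b := κ^2) (by linarith) one_pos (by positivity)).const_mul
            (π ^ ((d:ℝ)/2))
          refine MeasureTheory.IntegrableOn.congr_fun h (fun t ht => ?_) measurableSet_Ioi
          simp [Real.rpow_one, neg_mul]
        refine MeasureTheory.IntegrableOn.congr_fun base (fun t ht => ?_) measurableSet_Ioi
        have ht' : (0:ℝ) < t := ht
        rw [Real.div_rpow pi_pos.le ht'.le,
          show α - 1 = (ν - 1) + (d:ℝ)/2 by rw [hαdef]; ring, Real.rpow_add ht']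
        have hne : t ^ ((d:ℝ)/2) ≠ 0 := by positivity
        field_simp
      refine hIntg.congr ?_
      filter_upwards [ae_restrict_mem measurableSet_Ioi] with t ht
      have : ∫ x : EuclideanSpace ℝ (Fin d), ‖F x t‖
          = (t ^ (α-1) * Real.exp (-(κ^2*t))) * (π / t) ^ ((d:ℝ)/2) := by
        calc ∫ x : EuclideanSpace ℝ (Fin d), ‖F x t‖
            = ∫ x : EuclideanSpace ℝ (Fin d),
                (t ^ (α-1) * Real.exp (-(κ^2*t))) * Real.exp (-(t * ‖x‖^2)) := by
              exact congrArg (integral volume) (funext fun x => hnorm t ht x)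
          _ = (t ^ (α-1) * Real.exp (-(κ^2*t))) * ∫ x : EuclideanSpace ℝ (Fin d),
                Real.exp (-(t * ‖x‖^2)) := MeasureTheory.integral_const_mul _ _
          _ = _ := by rw [hGauss t ht]
      exact this.symm
  -- swap
  have hswap : ∫ x : EuclideanSpace ℝ (Fin d), ∫ t in Set.Ioi (0:ℝ), F x t
      = ∫ t in Set.Ioi (0:ℝ), ∫ x : EuclideanSpace ℝ (Fin d), F x t :=
    MeasureTheory.integral_integral_swap hG.swap
  -- inner Gaussian integral
  have hinner : ∀ t ∈ Set.Ioi (0:ℝ),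
      ∫ x : EuclideanSpace ℝ (Fin d), F x t
        = ((t ^ (α-1) * Real.exp (-(κ^2*t)) *
            ((π / t) ^ ((d:ℝ)/2) * Real.exp (-(‖s‖^2/(4*t)))) : ℝ) : ℂ) := by
    intro t ht
    have h0 : (0:ℝ) < ((t:ℂ)).re := by simpa using ht
    have ht' : (0:ℝ) < t := ht
    calc ∫ x : EuclideanSpace ℝ (Fin d), F x t
        = ∫ x : EuclideanSpace ℝ (Fin d),
            ((t ^ (α-1) * Real.exp (-(κ^2*t)) : ℝ) : ℂ) *
              Complex.exp (-(t:ℂ) * (‖x‖:ℂ)^2 + Complex.I * ((inner ℝ s x : ℝ):ℂ)) :=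
          (congrArg (integral volume) (funext fun x => (hFeq t x).symm))
      _ = ((t ^ (α-1) * Real.exp (-(κ^2*t)) : ℝ) : ℂ) *
            ∫ x : EuclideanSpace ℝ (Fin d),
              Complex.exp (-(t:ℂ) * (‖x‖:ℂ)^2 + Complex.I * ((inner ℝ s x : ℝ):ℂ)) :=
          MeasureTheory.integral_const_mul _ _
      _ = ((t ^ (α-1) * Real.exp (-(κ^2*t)) : ℝ) : ℂ) *
            ((↑π / (t:ℂ)) ^ (((d:ℕ):ℂ) / 2) *
              Complex.exp (Complex.I ^ 2 * (‖s‖:ℂ)^2 / (4 * (t:ℂ)))) := by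
          rw [GaussianFourier.integral_cexp_neg_mul_sq_norm_add h0 Complex.I s,
            finrank_euclideanSpace_fin]
      _ = _ := by
          have e1 : (↑π / (t:ℂ)) ^ (((d:ℕ):ℂ) / 2) = (((π/t) ^ ((d:ℝ)/2) : ℝ) : ℂ) := by
            rw [Complex.ofReal_cpow (by positivity)]
            push_cast
            ring_nf
          have e2 : Complex.exp (Complex.I ^ 2 * (‖s‖:ℂ)^2 / (4 * (t:ℂ)))
              = ((Real.exp (-(‖s‖^2/(4*t))) : ℝ) : ℂ) := by
            rw [Complex.I_sq,
              show (-1 * (‖s‖:ℂ)^2 / (4*(t:ℂ))) = ((-(‖s‖^2/(4*t)) : ℝ) : ℂ) by push_cast; ring,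
              ← Complex.ofReal_exp]
          rw [e1, e2]
          push_cast
          ring
  -- the real-valued t-integral
  set g : ℝ → ℝ := fun t => t ^ (ν-1) * Real.exp (-(t*κ^2 + ‖s‖^2/(4*t))) with hg
  have hreal1 : ∫ t in Set.Ioi (0:ℝ),
      t ^ (α-1) * Real.exp (-(κ^2*t)) * ((π / t) ^ ((d:ℝ)/2) * Real.exp (-(‖s‖^2/(4*t))))
      = π ^ ((d:ℝ)/2) * ∫ t in Set.Ioi (0:ℝ), g t := by
    rw [← MeasureTheory.integral_const_mul]
    refine setIntegral_congr_fun measurableSet_Ioi (fun t ht => ?_)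
    have ht' : (0:ℝ) < t := ht
    rw [hg]
    simp only []
    rw [Real.div_rpow pi_pos.le ht'.le,
      show α - 1 = (ν - 1) + (d:ℝ)/2 by rw [hαdef]; ring, Real.rpow_add ht',
      show (-(t*κ^2 + ‖s‖^2/(4*t))) = -(κ^2*t) + -(‖s‖^2/(4*t)) by ring, Real.exp_add]
    have hne : t ^ ((d:ℝ)/2) ≠ 0 := by positivity
    field_simp
  have hsub : ∫ t in Set.Ioi (0:ℝ), g t = β ^ ν * (2 * macdonaldK ν (κ * ‖s‖)) := by
    have h1 : ∫ u in Set.Ioi (0:ℝ), g (β * u) = β⁻¹ • ∫ t in Set.Ioi (β * 0), g t :=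
      integral_comp_mul_left_Ioi g 0 hβ
    rw [mul_zero, smul_eq_mul] at h1
    have h2 : ∫ u in Set.Ioi (0:ℝ), g (β * u)
        = β ^ (ν-1) * ∫ u in Set.Ioi (0:ℝ), u ^ (ν-1) * Real.exp (-(κ*‖s‖) * (u + 1/u) / 2) := by
      rw [← MeasureTheory.integral_const_mul]
      refine setIntegral_congr_fun measurableSet_Ioi (fun u hu => ?_)
      have hu' : (0:ℝ) < u := hu
      rw [hg]
      simp only []
      rw [Real.mul_rpow hβ.le hu'.le]
      have harg : -((β*u)*κ^2 + ‖s‖^2/(4*(β*u))) = -(κ*‖s‖) * (u + 1/u) / 2 := by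
        rw [hβdef]
        field_simp
        ring
      rw [harg]
      ring
    have h3 : β * β ^ (ν - 1) = β ^ ν := by
      rw [show ν = 1 + (ν-1) by ring, Real.rpow_add hβ, Real.rpow_one]
      ring_nf
    have h4 : ∫ u in Set.Ioi (0:ℝ), u ^ (ν-1) * Real.exp (-(κ*‖s‖) * (u + 1/u) / 2)
        = 2 * macdonaldK ν (κ * ‖s‖) := by
      rw [macdonaldK]; ring
    have : ∫ t in Set.Ioi (0:ℝ), g t = β * ∫ u in Set.Ioi (0:ℝ), g (β * u) := by
      rw [h1]; field_simp
    rw [this, h2, h4, ← mul_assoc, h3]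
  -- assemble
  calc ∫ x : EuclideanSpace ℝ (Fin d),
        Complex.exp (Complex.I * ((inner ℝ s x : ℝ) : ℂ)) *
          (((κ ^ 2 + ‖x‖ ^ 2) ^ (-(2 * ν + d) / 2) : ℝ) : ℂ)
      = ∫ x : EuclideanSpace ℝ (Fin d),
          (((Real.Gamma α)⁻¹ : ℝ) : ℂ) * ∫ t in Set.Ioi (0:ℝ), F x t :=
        congrArg (integral volume) (funext step1)
    _ = (((Real.Gamma α)⁻¹ : ℝ) : ℂ) * ∫ x : EuclideanSpace ℝ (Fin d),
          ∫ t in Set.Ioi (0:ℝ), F x t := MeasureTheory.integral_const_mul _ _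
    _ = (((Real.Gamma α)⁻¹ : ℝ) : ℂ) * ∫ t in Set.Ioi (0:ℝ),
          ∫ x : EuclideanSpace ℝ (Fin d), F x t := by rw [hswap]
    _ = (((Real.Gamma α)⁻¹ : ℝ) : ℂ) * ∫ t in Set.Ioi (0:ℝ),
          ((t ^ (α-1) * Real.exp (-(κ^2*t)) *
            ((π / t) ^ ((d:ℝ)/2) * Real.exp (-(‖s‖^2/(4*t)))) : ℝ) : ℂ) := by
        rw [setIntegral_congr_fun measurableSet_Ioi (fun t ht => hinner t ht)]
    _ = (((Real.Gamma α)⁻¹ * (π ^ ((d:ℝ)/2) * (β ^ ν * (2 * macdonaldK ν (κ * ‖s‖)))) : ℝ) : ℂ) := by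
        rw [integral_ofReal' (fun t => t ^ (α-1) * Real.exp (-(κ^2*t)) * ((π / t) ^ ((d:ℝ)/2) * Real.exp (-(‖s‖^2/(4*t))))), hreal1, hsub]
        push_cast
        ring
    _ = _ := by
        norm_cast
        have hκs : (κ*‖s‖) ^ ν = (2*κ^2) ^ ν * β ^ ν := by
          rw [← Real.mul_rpow (by positivity) hβ.le]
          congr 1
          rw [hβdef]
          field_simp
        rw [hκs]
        have h2κ : ((2:ℝ)*κ^2) ^ ν ≠ 0 := by positivity
        field_simp
end
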